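/- If a skew diagram D is not a sum of fat staircases and D' is obtained from D by successively near-concatenating any finite sequence of single columns (on the left or right, at any valid depths), then D' is not a sum of fat staircases. -/
import Mathlib


open Finset

/-- A diagram is a finite set of cells `(row, column)`. -/
abbrev Diagram := Finset (ℕ × ℕ)

def ht (D : Diagram) : ℕ := D.sup (fun c => c.1 + 1)
def wd (D : Diagram) : ℕ := D.sup (fun c => c.2 + 1)

/-- A semistandard Young tableau of shape `D` (entries are 0-based: the paper's
value `v` corresponds to the entry `v - 1`). -/
structure SSYT (D : Diagram) where
  entry : ℕ × ℕ → ℕ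
  rowWeak : ∀ i j, (i, j) ∈ D → (i, j + 1) ∈ D → entry (i, j) ≤ entry (i, j + 1)
  colStrict : ∀ i j, (i, j) ∈ D → (i + 1, j) ∈ D → entry (i, j) < entry (i + 1, j)
  zero_outside : ∀ c, c ∉ D → entry c = 0

/-- The content of a tableau: `content T v` is the number of cells with entry `v`. -/
noncomputable def content {D : Diagram} (T : SSYT D) : ℕ →₀ ℕ := ∑ c ∈ D, Finsupp.single (T.entry c) 1

/-- `c'` is read before (or equal to) `c` in the reading word:
rows top to bottom, each row right to left. -/
def ReadBefore (c' c : ℕ × ℕ) : Prop := c'.1 < c.1 ∨ (c'.1 = c.1 ∧ c.2 ≤ c'.2)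

instance (c' c : ℕ × ℕ) : Decidable (ReadBefore c' c) := by
  unfold ReadBefore; infer_instance

/-- The reading word of `T` is lattice. -/
def IsLattice {D : Diagram} (T : SSYT D) : Prop :=
  ∀ c ∈ D, ∀ v : ℕ,
    (D.filter (fun c' => ReadBefore c' c ∧ T.entry c' = v + 1)).card ≤
    (D.filter (fun c' => ReadBefore c' c ∧ T.entry c' = v)).card

/-- The skew Schur function of a diagram, as a power series in `x_0, x_1, …`:
the coefficient of the monomial with exponents `d` is the number of SSYT of
shape `D` and content `d`. -/
noncomputable def schurOf (D : Diagram) : MvPowerSeries ℕ ℤ :=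
  fun d => (Nat.card {T : SSYT D // content T = d} : ℤ)

/-- Number of lattice SSYT of shape `D` and content `d`. -/
noncomputable def lrCount (D : Diagram) (d : ℕ →₀ ℕ) : ℕ :=
  Nat.card {T : SSYT D // IsLattice T ∧ content T = d}

/-- Littlewood–Richardson coefficient `c^lam_{mu, d}` (Littlewood–Richardson rule). -/
noncomputable def lrCoeff (lam mu : YoungDiagram) (d : ℕ →₀ ℕ) : ℕ :=
  lrCount (lam.cells \ mu.cells) d

def diagramOfRows (L : List ℕ) : Diagram :=
  (Finset.range L.length).biUnion (fun i => (Finset.range (L.getD i 0)).image (fun j => (i, j)))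

/-- The row lengths of the fat staircase `δ_α`. -/
def staircaseRows (α : List ℕ) : List ℕ :=
  ((List.range α.length).reverse.map (fun i => List.replicate (α.getD i 0) (i + 1))).flatten

/-- The fat staircase `δ_α = (n^{α_n}, …, 1^{α_1})` for `α = (α_1, …, α_n)`. -/
def fatStaircase (α : List ℕ) : Diagram := diagramOfRows (staircaseRows α)

/-- 180 degree rotation of a diagram. -/
def rotD (D : Diagram) : Diagram :=
  D.image (fun c => (ht D - 1 - c.1, wd D - 1 - c.2))

/-- The sequence of row lengths of a diagram, as a finitely supported function. -/
noncomputable def rowContent (D : Diagram) : ℕ →₀ ℕ := ∑ c ∈ D, Finsupp.single c.1 1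

/-- A content (partition) `d` is a fat staircase. -/
def IsFatStaircase (d : ℕ →₀ ℕ) : Prop :=
  ∃ α : List ℕ, (∀ a ∈ α, 0 < a) ∧ d = rowContent (fatStaircase α)

/-- Every Schur function appearing in the expansion of `s_D` is indexed by a fat staircase. -/
def IsSumOfFatStaircases (D : Diagram) : Prop :=
  ∀ d, lrCount D d ≠ 0 → IsFatStaircase d

/-- Near-concatenation of depth `i`. -/
def nearConcat (i : ℕ) (D1 D2 : Diagram) : Diagram :=
  D1.image (fun c => (c.1 + (ht D2 - i), c.2)) ∪ D2.image (fun c => (c.1, c.2 + wd D1))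

/-- Direct sum of diagrams. -/
def directSum (D1 D2 : Diagram) : Diagram := nearConcat 0 D1 D2

/-- A single column of `l` boxes. -/
def colD (l : ℕ) : Diagram := (Finset.range l).image (fun i => (i, 0))

/-- A single row of `m` boxes. -/
def rowD (m : ℕ) : Diagram := (Finset.range m).image (fun j => (0, j))

def colLenAt (D : Diagram) (j : ℕ) : ℕ := (D.filter (fun c => c.2 = j)).card
noncomputable def leftCol (D : Diagram) : ℕ := sInf {j | ∃ i, (i, j) ∈ D}
noncomputable def blCol (D : Diagram) : ℕ := sInf {j | (ht D - 1, j) ∈ D}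
noncomputable def topRow (D : Diagram) : ℕ := sInf {i | ∃ j, (i, j) ∈ D}
noncomputable def tlCol (D : Diagram) : ℕ := sInf {j | (topRow D, j) ∈ D}
def lastRowLen (D : Diagram) : ℕ := (D.filter (fun c => c.1 = ht D - 1)).card

/-- `S(F, E; k)`: the foundation `F` is placed immediately below `E`, with the
first row of `F` beginning one box below and `k` boxes left of the bottom-left
box of `E`. -/
noncomputable def SDiagG (F E : Diagram) (k : ℕ) : Diagram :=
  E.image (fun c => (c.1, c.2 + tlCol F + k)) ∪
  F.image (fun c => (c.1 + ht E, c.2 + blCol E))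

/-- `S(λ, μ, E; k)` with foundation the skew diagram `λ/μ`. -/
noncomputable def SDiag (lam mu : YoungDiagram) (E : Diagram) (k : ℕ) : Diagram :=
  SDiagG (lam.cells \ mu.cells) E k

/-- The set `R_{α,k}` (values as in the paper, i.e. 1-based). -/
def Rset (α : List ℕ) (k : ℕ) : Set ℕ :=
  {v | ∃ j, 1 ≤ j ∧ j ≤ α.length ∧ v = 1 + (α.drop (α.length - j)).sum} ∪
  {v | v = 1 ∧ 0 < k}

def rectD (a b : ℕ) : Diagram := Finset.range a ×ˢ Finset.range b

/-- The complement `D^c` of `D` in the `a × b` rectangle: the 180 degree rotation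
of the set-theoretic complement of `D` in the rectangle. -/
def complD (a b : ℕ) (D : Diagram) : Diagram :=
  (rectD a b \ D).image (fun c => (a - 1 - c.1, b - 1 - c.2))

def IsSkewDiagram (D : Diagram) : Prop :=
  ∃ lam mu : YoungDiagram, mu ≤ lam ∧ D = lam.cells \ mu.cells

def diagramOfF (d : ℕ →₀ ℕ) : Diagram :=
  d.support.biUnion (fun i => (Finset.range (d i)).image (fun j => (i, j)))

/-- A symmetric function is Schur-positive when it is a nonnegative integer
combination of Schur functions of partitions. -/
def SchurPositive (f : MvPowerSeries ℕ ℤ) : Prop :=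
  ∃ (S : Finset (ℕ →₀ ℕ)) (a : (ℕ →₀ ℕ) → ℕ),
    (∀ d ∈ S, ∀ i, d (i + 1) ≤ d i) ∧
    f = ∑ d ∈ S, (a d : ℤ) • schurOf (diagramOfF d)

def AdjCell (c c' : ℕ × ℕ) : Prop :=
  (c.1 = c'.1 ∧ (c.2 + 1 = c'.2 ∨ c'.2 + 1 = c.2)) ∨
  (c.2 = c'.2 ∧ (c.1 + 1 = c'.1 ∨ c'.1 + 1 = c.1))

def ConnectedDiagram (D : Diagram) : Prop :=
  ∀ c ∈ D, ∀ c' ∈ D, Relation.ReflTransGen (fun a b => a ∈ D ∧ b ∈ D ∧ AdjCell a b) c c'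

/-- `ColExt D D'`: `D'` is obtained from `D` by successively near-concatenating
single columns on the left or right at valid depths. -/
inductive ColExt : Diagram → Diagram → Prop
  | refl (D : Diagram) : ColExt D D
  | left (D E : Diagram) (i l : ℕ) (h : ColExt D E) (hil : i ≤ l)
      (hE : i ≤ colLenAt E (leftCol E)) : ColExt D (nearConcat i (colD l) E)
  | right (D E : Diagram) (i l : ℕ) (h : ColExt D E) (hil : i ≤ l)
      (hE : i ≤ colLenAt E (wd E - 1)) : ColExt D (nearConcat i E (colD l))


section AuxFS
open Finset

lemma content_apply {D : Diagram} (T : SSYT D) (v : ℕ) :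
    content T v = (D.filter (fun c => T.entry c = v)).card := by
  classical
  rw [content, Finset.card_filter, Finset.sum_apply']
  exact Finset.sum_congr rfl fun c hc => Finsupp.single_apply

lemma rowContent_apply (D : Diagram) (r : ℕ) :
    rowContent D r = (D.filter (fun c => c.1 = r)).card := by
  classical
  rw [rowContent, Finset.card_filter, Finset.sum_apply']
  exact Finset.sum_congr rfl fun c hc => Finsupp.single_apply

lemma mem_diagramOfRows {L : List ℕ} {r j : ℕ} :
    (r, j) ∈ diagramOfRows L ↔ r < L.length ∧ j < L.getD r 0 := by
  simp only [diagramOfRows, Finset.mem_biUnion, Finset.mem_image, Finset.mem_range, Prod.mk.injEq]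
  constructor
  · rintro ⟨i, hi, j', hj', rfl, rfl⟩; exact ⟨hi, hj'⟩
  · rintro ⟨h1, h2⟩; exact ⟨r, h1, j, h2, rfl, rfl⟩

lemma rowContent_diagramOfRows (L : List ℕ) (r : ℕ) :
    rowContent (diagramOfRows L) r = L.getD r 0 := by
  classical
  rw [rowContent_apply]
  by_cases hr : r < L.length
  · have he : (diagramOfRows L).filter (fun c => c.1 = r)
        = (Finset.range (L.getD r 0)).image (fun j => (r, j)) := by
      ext ⟨a, b⟩
      simp only [Finset.mem_filter, Finset.mem_image, Finset.mem_range, Prod.mk.injEq]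
      constructor
      · rintro ⟨hm, rfl⟩; exact ⟨b, (mem_diagramOfRows.mp hm).2, rfl, rfl⟩
      · rintro ⟨j', hj', rfl, rfl⟩
        exact ⟨mem_diagramOfRows.mpr ⟨hr, hj'⟩, rfl⟩
    rw [he, Finset.card_image_of_injective _ (fun a b h => by simpa using h), Finset.card_range]
  · rw [List.getD_eq_default _ _ (le_of_not_gt hr)]
    rw [Finset.card_eq_zero, Finset.filter_eq_empty_iff]
    rintro ⟨a, b⟩ hm h
    have := (mem_diagramOfRows.mp hm).1
    simp only at h
    omega

lemma staircaseRows_concat (β : List ℕ) (b : ℕ) :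
    staircaseRows (β ++ [b]) = List.replicate b (β.length + 1) ++ staircaseRows β := by
  unfold staircaseRows
  have hlen : (β ++ [b]).length = β.length + 1 := by simp
  rw [hlen, List.range_succ, List.reverse_append]
  simp only [List.reverse_singleton, List.singleton_append, List.map_cons, List.flatten_cons]
  congr 1
  · congr 1
    rw [List.getD_append_right _ _ _ _ (le_refl β.length)]
    simp
  · apply congrArg
    apply List.map_congr_left
    intro i hi
    rw [List.mem_reverse, List.mem_range] at hi
    rw [List.getD_append _ _ _ _ hi]

lemma getD_replicate_append (b m : ℕ) (M : List ℕ) (r : ℕ) :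
    (List.replicate b m ++ M).getD r 0 = if r < b then m else M.getD (r - b) 0 := by
  split_ifs with h
  · rw [List.getD_append _ _ _ _ (by simpa using h)]
    rw [List.getD_eq_getElem _ _ (by simpa using h)]
    simp
  · rw [List.getD_append_right _ _ _ _ (by simpa using h)]
    simp

lemma staircase_getD_zero (α : List ℕ) (hpos : ∀ a ∈ α, 0 < a) (hne : α ≠ []) :
    (staircaseRows α).getD 0 0 = α.length := by
  induction α using List.reverseRecOn with
  | nil => exact absurd rfl hne
  | append_singleton β b ih =>
    rw [staircaseRows_concat, getD_replicate_append]
    have hb : 0 < b := hpos b (by simp)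
    simp [hb]

def niceFun (d : ℕ → ℕ) : Prop := (∀ v, d (v + 1) ≤ d v) ∧ (∀ v, d v ≤ d (v + 1) + 1)

lemma staircase_getD_le (α : List ℕ) (r : ℕ) :
    (staircaseRows α).getD r 0 ≤ α.length := by
  induction α using List.reverseRecOn generalizing r with
  | nil => simp [staircaseRows]
  | append_singleton β b ih =>
    rw [staircaseRows_concat, getD_replicate_append]
    split_ifs with h
    · simp
    · have := ih (r - b); simp only [List.length_append, List.length_singleton]; omega

lemma nice_staircase (α : List ℕ) (hpos : ∀ a ∈ α, 0 < a) :
    niceFun (fun r => (staircaseRows α).getD r 0) := by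
  induction α using List.reverseRecOn with
  | nil => constructor <;> intro v <;> simp [staircaseRows]
  | append_singleton β b ih =>
    have hpos' : ∀ a ∈ β, 0 < a := fun a ha => hpos a (by simp [ha])
    have hb : 0 < b := hpos b (by simp)
    obtain ⟨ih1, ih2⟩ := ih hpos'
    have hhead : β = [] ∨ (staircaseRows β).getD 0 0 = β.length := by
      rcases eq_or_ne β [] with h | h
      · exact Or.inl h
      · exact Or.inr (staircase_getD_zero β hpos' h)
    constructor <;> intro v <;>
      simp only [staircaseRows_concat, getD_replicate_append]
    · rcases lt_or_ge (v + 1) b with h | h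
      · rw [if_pos h, if_pos (by omega)]
      · rw [if_neg (by omega)]
        rcases lt_or_ge v b with h2 | h2
        · rw [if_pos h2]
          have := staircase_getD_le β (v + 1 - b)
          omega
        · rw [if_neg (by omega)]
          have h3 := ih1 (v - b)
          simp only at h3
          have hrw : v + 1 - b = (v - b) + 1 := by omega
          rw [hrw]; exact h3
    · rcases lt_or_ge v b with h | h
      · rcases lt_or_ge (v + 1) b with h2 | h2
        · rw [if_pos h, if_pos h2]; omega
        · rw [if_pos h, if_neg (by omega)]
          have hv : v + 1 - b = 0 := by omega
          rw [hv]
          rcases hhead with hh | hh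
          · have : β.length = 0 := by simp [hh]
            omega
          · omega
      · rw [if_neg (by omega), if_neg (by omega)]
        have h3 := ih2 (v - b)
        simp only at h3
        have hrw : v + 1 - b = (v - b) + 1 := by omega
        rw [hrw]; exact h3

lemma nice_to_staircase : ∀ n (d : ℕ → ℕ), (∀ v, d (v + 1) ≤ d v) → (∀ v, d v ≤ d (v + 1) + 1) →
    (∃ N, ∀ r, N ≤ r → d r = 0) → d 0 = n →
    ∃ α : List ℕ, (∀ a ∈ α, 0 < a) ∧ α.length = n ∧ ∀ r, d r = (staircaseRows α).getD r 0 := by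
  intro n
  induction n with
  | zero =>
    intro d h1 h2 hN h0
    refine ⟨[], by simp, rfl, fun r => ?_⟩
    have := (antitone_nat_of_succ_le h1) (Nat.zero_le r)
    simp only [staircaseRows, List.length_nil, List.range_zero, List.reverse_nil, List.map_nil,
      List.flatten_nil, List.getD_nil]
    omega
  | succ n ih =>
    intro d h1 h2 hN h0
    obtain ⟨N, hNz⟩ := hN
    have hanti := antitone_nat_of_succ_le h1
    have hSne : {r | d r < n + 1}.Nonempty := ⟨N, by simp [hNz N le_rfl]⟩
    have hb_mem : d (sInf {r | d r < n + 1}) < n + 1 := Nat.sInf_mem hSne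
    set b := sInf {r | d r < n + 1} with hbdef
    have hb_big : ∀ r, r < b → d r = n + 1 := by
      intro r hr
      have h3 : r ∉ {r | d r < n + 1} := Nat.notMem_of_lt_sInf (by rw [← hbdef]; exact hr)
      have h4 : ¬ d r < n + 1 := h3
      have h5 : d r ≤ d 0 := hanti (Nat.zero_le r)
      omega
    have hb0 : 0 < b := by
      rcases Nat.eq_zero_or_pos b with h | h
      · rw [h] at hb_mem; omega
      · exact h
    have hdb : d b = n := by
      have h5 := h2 (b - 1)
      have h6 : d (b - 1) = n + 1 := hb_big _ (by omega)
      have h7 : b - 1 + 1 = b := by omega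
      rw [h7] at h5
      omega
    obtain ⟨α₂, hp2, hl2, hv2⟩ := ih (fun r => d (r + b))
      (fun v => by
        show d (v + 1 + b) ≤ d (v + b)
        have he : v + 1 + b = v + b + 1 := by omega
        rw [he]; exact h1 (v + b))
      (fun v => by
        show d (v + b) ≤ d (v + 1 + b) + 1
        have he : v + 1 + b = v + b + 1 := by omega
        rw [he]; exact h2 (v + b))
      ⟨N, fun r hr => hNz (r + b) (by omega)⟩ (by simpa using hdb)
    refine ⟨α₂ ++ [b], ?_, by simp [hl2], fun r => ?_⟩
    · intro a ha
      rcases List.mem_append.mp ha with h | h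
      · exact hp2 a h
      · simp only [List.mem_singleton] at h; omega
    · rw [staircaseRows_concat, getD_replicate_append, hl2]
      split_ifs with h
      · exact hb_big r h
      · rw [← hv2 (r - b)]
        congr 1
        omega

lemma fatStaircase_apply (α : List ℕ) (r : ℕ) :
    rowContent (fatStaircase α) r = (staircaseRows α).getD r 0 :=
  rowContent_diagramOfRows _ r

lemma isFatStaircase_iff_nice (d : ℕ →₀ ℕ) : IsFatStaircase d ↔ niceFun ⇑d := by
  constructor
  · rintro ⟨α, hpos, rfl⟩
    have h := nice_staircase α hpos
    constructor <;> intro v <;> rw [fatStaircase_apply, fatStaircase_apply]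
    · exact h.1 v
    · exact h.2 v
  · rintro ⟨h1, h2⟩
    obtain ⟨α, hpos, _, hval⟩ := nice_to_staircase (d 0) ⇑d h1 h2
      ⟨(d.support.sup id) + 1, fun r hr => by
        by_contra h
        have : r ∈ d.support := Finsupp.mem_support_iff.mpr h
        have := Finset.le_sup (f := id) this
        simp only [id] at this
        omega⟩ rfl
    exact ⟨α, hpos, Finsupp.ext fun r => by rw [hval r, fatStaircase_apply]⟩

lemma colSum_apply (l v : ℕ) :
    (∑ t ∈ Finset.range l, Finsupp.single t (1 : ℕ)) v = if v < l then 1 else 0 := by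
  classical
  rw [Finset.sum_apply']
  simp [Finsupp.single_apply, Finset.sum_ite_eq, Finset.mem_range]

lemma not_FS_add (d : ℕ →₀ ℕ) (l : ℕ) (hanti : ∀ v, d (v + 1) ≤ d v)
    (h : ¬ IsFatStaircase d) :
    ¬ IsFatStaircase (d + ∑ t ∈ Finset.range l, Finsupp.single t 1) := by
  intro hFS
  apply h
  rw [isFatStaircase_iff_nice] at hFS ⊢
  have happ : ∀ v, (d + ∑ t ∈ Finset.range l, Finsupp.single t 1 : ℕ →₀ ℕ) v
      = d v + if v < l then 1 else 0 := by
    intro v; rw [Finsupp.add_apply, colSum_apply]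
  obtain ⟨n1, n2⟩ := hFS
  constructor <;> intro v
  · have a := n1 v; have b := n2 v
    rw [happ, happ] at a b
    have hav := hanti v
    split_ifs at a b <;> omega
  · have a := n1 v; have b := n2 v
    rw [happ, happ] at a b
    have hav := hanti v
    split_ifs at a b <;> omega

lemma isFatStaircase_zero : IsFatStaircase 0 := by
  refine ⟨[], by simp, ?_⟩
  ext r
  rw [fatStaircase_apply]
  simp [staircaseRows]

end AuxFS


section AuxSSYT
open Finset

lemma SSYT.ext' {D : Diagram} {T T' : SSYT D} (h : T.entry = T'.entry) : T = T' := by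
  cases T; cases T'; cases h; rfl

lemma entry_le_sup {D : Diagram} {d : ℕ →₀ ℕ} (T : SSYT D) (hc : content T = d)
    {c : ℕ × ℕ} (h : c ∈ D) : T.entry c ≤ d.support.sup id := by
  have h1 : content T (T.entry c) ≠ 0 := by
    rw [content_apply]
    exact Finset.card_ne_zero_of_mem (Finset.mem_filter.mpr ⟨h, rfl⟩)
  rw [hc] at h1
  exact Finset.le_sup (f := id) (Finsupp.mem_support_iff.mpr h1)

lemma finite_lattice_content (D : Diagram) (d : ℕ →₀ ℕ) :
    Finite {T : SSYT D // IsLattice T ∧ content T = d} := by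
  classical
  set M := d.support.sup id with hM
  have hb : ∀ T : {T : SSYT D // IsLattice T ∧ content T = d}, ∀ c : {x // x ∈ D},
      T.1.entry c < M + 1 :=
    fun T c => Nat.lt_succ_of_le (entry_le_sup T.1 T.2.2 c.2)
  refine Finite.of_injective
    (fun T => (fun c : {x // x ∈ D} => (⟨T.1.entry c, hb T c⟩ : Fin (M + 1)))) ?_
  intro T1 T2 h
  apply Subtype.ext
  apply SSYT.ext'
  funext c
  by_cases hc : c ∈ D
  · have := congrFun h ⟨c, hc⟩
    simpa [Fin.ext_iff] using this
  · rw [T1.1.zero_outside c hc, T2.1.zero_outside c hc]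

lemma lrCount_ne_zero {D : Diagram} {d : ℕ →₀ ℕ} (T : SSYT D) (h1 : IsLattice T)
    (h2 : content T = d) : lrCount D d ≠ 0 := by
  have := finite_lattice_content D d
  rw [lrCount, Nat.card_ne_zero]
  exact ⟨⟨⟨T, h1, h2⟩⟩, this⟩

lemma exists_of_lrCount {D : Diagram} {d : ℕ →₀ ℕ} (h : lrCount D d ≠ 0) :
    ∃ T : SSYT D, IsLattice T ∧ content T = d := by
  rw [lrCount, Nat.card_ne_zero] at h
  obtain ⟨⟨T, hT⟩⟩ := h.1
  exact ⟨T, hT⟩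

lemma lattice_row_prefix {D : Diagram} {T : SSYT D} (hT : IsLattice T) (R v : ℕ) :
    (D.filter (fun c => c.1 < R ∧ T.entry c = v + 1)).card ≤
    (D.filter (fun c => c.1 < R ∧ T.entry c = v)).card := by
  classical
  by_cases hS : (D.filter (fun c => c.1 < R)).Nonempty
  · obtain ⟨c1, hc1, hr⟩ := Finset.exists_mem_eq_sup' hS Prod.fst
    have hS2 : ((D.filter (fun c => c.1 < R)).filter (fun c => c.1 =
        (D.filter (fun c => c.1 < R)).sup' hS Prod.fst)).Nonempty :=
      ⟨c1, Finset.mem_filter.mpr ⟨hc1, hr.symm⟩⟩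
    obtain ⟨c2, hc2, hj⟩ := Finset.exists_mem_eq_inf' hS2 Prod.snd
    rw [Finset.mem_filter] at hc2
    obtain ⟨hc2S, hc2r⟩ := hc2
    rw [Finset.mem_filter] at hc2S
    have hkey : ∀ c ∈ D, (c.1 < R ↔ ReadBefore c c2) := by
      intro c hc
      constructor
      · intro hlt
        have hcS : c ∈ D.filter (fun c => c.1 < R) := Finset.mem_filter.mpr ⟨hc, hlt⟩
        have h4 : c.1 ≤ c2.1 := by
          rw [hc2r]
          exact Finset.le_sup' Prod.fst hcS
        rcases lt_or_eq_of_le h4 with h5 | h5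
        · exact Or.inl h5
        · refine Or.inr ⟨h5, ?_⟩
          have hcS2 : c ∈ (D.filter (fun c => c.1 < R)).filter (fun c => c.1 =
              (D.filter (fun c => c.1 < R)).sup' hS Prod.fst) :=
            Finset.mem_filter.mpr ⟨hcS, by rw [h5, hc2r]⟩
          rw [← hj]
          exact Finset.inf'_le Prod.snd hcS2
      · intro hrb
        rcases hrb with h5 | h5
        · have := hc2S.2; omega
        · rw [h5.1]; exact hc2S.2
    have he : ∀ u, D.filter (fun c => c.1 < R ∧ T.entry c = u)
        = D.filter (fun c => ReadBefore c c2 ∧ T.entry c = u) := by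
      intro u
      apply Finset.filter_congr
      intro c hc
      rw [hkey c hc]
    rw [he (v + 1), he v]
    exact hT c2 hc2S.1 v
  · have hempty : D.filter (fun c => c.1 < R ∧ T.entry c = v + 1) = ∅ := by
      rw [Finset.filter_eq_empty_iff]
      intro c hc hcc
      exact hS ⟨c, Finset.mem_filter.mpr ⟨hc, hcc.1⟩⟩
    rw [hempty]
    simp

lemma lt_ht_of_mem {D : Diagram} {c : ℕ × ℕ} (h : c ∈ D) : c.1 < ht D :=
  Finset.le_sup (f := fun c => c.1 + 1) h

lemma lt_wd_of_mem {D : Diagram} {c : ℕ × ℕ} (h : c ∈ D) : c.2 < wd D :=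
  Finset.le_sup (f := fun c => c.2 + 1) h

lemma content_antitone {D : Diagram} {T : SSYT D} (hT : IsLattice T) (v : ℕ) :
    content T (v + 1) ≤ content T v := by
  classical
  rw [content_apply, content_apply]
  have he : ∀ u : ℕ, D.filter (fun c => T.entry c = u)
      = D.filter (fun c => c.1 < ht D ∧ T.entry c = u) := by
    intro u
    apply Finset.filter_congr
    intro c hc
    exact ⟨fun h => ⟨lt_ht_of_mem hc, h⟩, fun h => h.2⟩
  rw [he (v + 1), he v]
  exact lattice_row_prefix hT (ht D) v

lemma mem_colD {l r j : ℕ} : (r, j) ∈ colD l ↔ r < l ∧ j = 0 := by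
  simp only [colD, Finset.mem_image, Finset.mem_range, Prod.mk.injEq]
  constructor
  · rintro ⟨t, ht, rfl, rfl⟩; exact ⟨ht, rfl⟩
  · rintro ⟨h1, rfl⟩; exact ⟨r, h1, rfl, rfl⟩

lemma ht_eq {D : Diagram} {n : ℕ} (h : ∀ c ∈ D, c.1 < n) (hex : ∃ c ∈ D, c.1 + 1 = n) :
    ht D = n := by
  apply le_antisymm
  · exact Finset.sup_le fun c hc => h c hc
  · obtain ⟨c, hc, hcn⟩ := hex
    rw [← hcn]
    exact Finset.le_sup (f := fun c => c.1 + 1) hc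

lemma wd_eq {D : Diagram} {n : ℕ} (h : ∀ c ∈ D, c.2 < n) (hex : ∃ c ∈ D, c.2 + 1 = n) :
    wd D = n := by
  apply le_antisymm
  · exact Finset.sup_le fun c hc => h c hc
  · obtain ⟨c, hc, hcn⟩ := hex
    rw [← hcn]
    exact Finset.le_sup (f := fun c => c.2 + 1) hc

lemma ht_colD {l : ℕ} (hl : 0 < l) : ht (colD l) = l :=
  ht_eq (fun c hc => by
      obtain ⟨r, j⟩ := c
      exact (mem_colD.mp hc).1)
    ⟨(l - 1, 0), mem_colD.mpr ⟨by omega, rfl⟩, by omega⟩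

lemma wd_colD {l : ℕ} (hl : 0 < l) : wd (colD l) = 1 :=
  wd_eq (fun c hc => by
      obtain ⟨r, j⟩ := c
      have := (mem_colD.mp hc).2
      omega)
    ⟨(0, 0), mem_colD.mpr ⟨hl, rfl⟩, rfl⟩

lemma topRow_le {D : Diagram} {c : ℕ × ℕ} (h : c ∈ D) : topRow D ≤ c.1 :=
  Nat.sInf_le ⟨c.2, by rwa [Prod.mk.eta]⟩

lemma leftCol_le {D : Diagram} {c : ℕ × ℕ} (h : c ∈ D) : leftCol D ≤ c.2 :=
  Nat.sInf_le ⟨c.1, by rwa [Prod.mk.eta]⟩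

lemma exists_topRow {D : Diagram} (h : D.Nonempty) : ∃ j, (topRow D, j) ∈ D := by
  obtain ⟨c, hc⟩ := h
  exact Nat.sInf_mem (⟨c.1, c.2, by rwa [Prod.mk.eta]⟩ : Set.Nonempty {i | ∃ j, (i, j) ∈ D})

lemma exists_leftCol {D : Diagram} (h : D.Nonempty) : ∃ i, (i, leftCol D) ∈ D := by
  obtain ⟨c, hc⟩ := h
  exact Nat.sInf_mem (⟨c.2, c.1, by rwa [Prod.mk.eta]⟩ : Set.Nonempty {j | ∃ i, (i, j) ∈ D})

lemma topRow_eq {D : Diagram} {n : ℕ} (hmem : ∃ j, (n, j) ∈ D) (hall : ∀ c ∈ D, n ≤ c.1) :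
    topRow D = n := by
  apply le_antisymm (Nat.sInf_le hmem)
  apply le_csInf ⟨n, hmem⟩
  rintro b ⟨j, hj⟩
  exact hall (b, j) hj

lemma leftCol_eq {D : Diagram} {n : ℕ} (hmem : ∃ i, (i, n) ∈ D) (hall : ∀ c ∈ D, n ≤ c.2) :
    leftCol D = n := by
  apply le_antisymm (Nat.sInf_le hmem)
  apply le_csInf ⟨n, hmem⟩
  rintro b ⟨i, hi⟩
  exact hall (i, b) hi

lemma colLen_le (D : Diagram) (hne : D.Nonempty) (j : ℕ) :
    topRow D + colLenAt D j ≤ ht D := by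
  classical
  have h1 : colLenAt D j = ((D.filter (fun c => c.2 = j)).image Prod.fst).card := by
    rw [Finset.card_image_of_injOn]
    · rfl
    · intro a ha b hb hab
      simp only [Finset.mem_coe, Finset.mem_filter] at ha hb
      exact Prod.ext hab (ha.2.trans hb.2.symm)
  have h2 : (D.filter (fun c => c.2 = j)).image Prod.fst ⊆ Finset.Ico (topRow D) (ht D) := by
    intro r hr
    simp only [Finset.mem_image, Finset.mem_filter] at hr
    obtain ⟨c, ⟨hc, _⟩, rfl⟩ := hr
    exact Finset.mem_Ico.mpr ⟨topRow_le hc, lt_ht_of_mem hc⟩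
  have h3 := Finset.card_le_card h2
  rw [Nat.card_Ico] at h3
  obtain ⟨c, hc⟩ := hne
  have h4 := topRow_le hc
  have h5 := lt_ht_of_mem hc
  omega

end AuxSSYT


section AuxConcat
open Finset

lemma readBefore_up {r r' j : ℕ} {x : ℕ × ℕ} (h : r ≤ r') (hrb : ReadBefore (r', j) x) :
    ReadBefore (r, j) x := by
  rcases hrb with h1 | h1
  · exact Or.inl (by simp only at h1 ⊢; omega)
  · rcases eq_or_lt_of_le h with rfl | h2
    · exact Or.inr h1
    · simp only at h1
      exact Or.inl (by simp only; omega)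

lemma filter_eq_single {s : Finset ℕ} {Q : ℕ → Prop} [DecidablePred Q] (u : ℕ) :
    (s.filter (fun t => Q t ∧ t = u)).card = if u ∈ s ∧ Q u then 1 else 0 := by
  classical
  split_ifs with h
  · rw [Finset.card_eq_one]
    refine ⟨u, ?_⟩
    ext t
    simp only [Finset.mem_filter, Finset.mem_singleton]
    constructor
    · rintro ⟨_, _, rfl⟩; rfl
    · rintro rfl; exact ⟨h.1, h.2, rfl⟩
  · rw [Finset.card_eq_zero, Finset.filter_eq_empty_iff]
    rintro t hts ⟨hQ, rfl⟩
    exact h ⟨hts, hQ⟩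

lemma mem_nearConcat_right {E : Diagram} {i l : ℕ} (hl : 0 < l) (x : ℕ × ℕ) :
    x ∈ nearConcat i E (colD l) ↔
      (l - i ≤ x.1 ∧ (x.1 - (l - i), x.2) ∈ E) ∨ (x.2 = wd E ∧ x.1 < l) := by
  unfold nearConcat
  rw [Finset.mem_union, ht_colD hl]
  simp only [Finset.mem_image]
  constructor
  · rintro (⟨c, hc, rfl⟩ | ⟨c, hc, rfl⟩)
    · left
      refine ⟨by simp only; omega, ?_⟩
      have : (c.1 + (l - i) - (l - i), c.2) = c := by
        rw [Prod.ext_iff]; constructor <;> simp only <;> omega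
      rwa [this]
    · right
      obtain ⟨r, j⟩ := c
      obtain ⟨h1, rfl⟩ := mem_colD.mp hc
      exact ⟨by simp, h1⟩
  · rintro (⟨h1, h2⟩ | ⟨h1, h2⟩)
    · left
      refine ⟨(x.1 - (l - i), x.2), h2, ?_⟩
      rw [Prod.ext_iff]; constructor <;> simp only <;> omega
    · right
      refine ⟨(x.1, 0), mem_colD.mpr ⟨h2, rfl⟩, ?_⟩
      rw [Prod.ext_iff]; constructor <;> simp only <;> omega

lemma mem_nearConcat_left {E : Diagram} {i l : ℕ} (hl : 0 < l) (x : ℕ × ℕ) :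
    x ∈ nearConcat i (colD l) E ↔
      (x.2 = 0 ∧ ht E - i ≤ x.1 ∧ x.1 < (ht E - i) + l) ∨ (1 ≤ x.2 ∧ (x.1, x.2 - 1) ∈ E) := by
  unfold nearConcat
  rw [Finset.mem_union, wd_colD hl]
  simp only [Finset.mem_image]
  constructor
  · rintro (⟨c, hc, rfl⟩ | ⟨c, hc, rfl⟩)
    · left
      obtain ⟨r, j⟩ := c
      obtain ⟨h1, rfl⟩ := mem_colD.mp hc
      exact ⟨by simp, by simp only; omega, by simp only; omega⟩
    · right
      refine ⟨by simp only; omega, ?_⟩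
      have : (c.1, c.2 + 1 - 1) = c := by
        rw [Prod.ext_iff]; constructor <;> simp only <;> omega
      rwa [this]
  · rintro (⟨h1, h2, h3⟩ | ⟨h1, h2⟩)
    · left
      refine ⟨(x.1 - (ht E - i), 0), mem_colD.mpr ⟨by omega, rfl⟩, ?_⟩
      rw [Prod.ext_iff]; constructor <;> simp only <;> omega
    · right
      refine ⟨(x.1, x.2 - 1), h2, ?_⟩
      rw [Prod.ext_iff]; constructor <;> simp only <;> omega

lemma colD_shift (l W : ℕ) :
    (colD l).image (fun c => (c.1, c.2 + W)) = (Finset.range l).image (fun t => (t, W)) := by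
  rw [colD, Finset.image_image]
  apply Finset.image_congr
  intro t _
  simp

lemma card_filter_nearConcat_right (E : Diagram) (i l : ℕ) (hl : 0 < l)
    (P : ℕ × ℕ → Prop) [DecidablePred P] :
    ((nearConcat i E (colD l)).filter P).card
      = (E.filter (fun c => P (c.1 + (l - i), c.2))).card
        + ((Finset.range l).filter (fun t => P (t, wd E))).card := by
  classical
  have h1 : ((E.image (fun c => (c.1 + (l - i), c.2))).filter P).card
      = (E.filter (fun c => P (c.1 + (l - i), c.2))).card := by
    rw [Finset.filter_image, Finset.card_image_of_injective]
    intro c1 c2 hc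
    rw [Prod.ext_iff] at hc ⊢
    simp only at hc
    exact ⟨by omega, hc.2⟩
  have h2 : (((Finset.range l).image (fun t => (t, wd E))).filter P).card
      = ((Finset.range l).filter (fun t => P (t, wd E))).card := by
    rw [Finset.filter_image, Finset.card_image_of_injective]
    intro t1 t2 hc
    have h := congrArg Prod.fst hc
    simpa using h
  unfold nearConcat
  rw [ht_colD hl, colD_shift l (wd E), Finset.filter_union]
  rw [Finset.card_union_of_disjoint, h1, h2]
  · apply Finset.disjoint_filter_filter
    rw [Finset.disjoint_left]
    rintro x hx1 hx2
    simp only [Finset.mem_image] at hx1 hx2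
    obtain ⟨c, hc, rfl⟩ := hx1
    obtain ⟨t, _, hteq⟩ := hx2
    have := lt_wd_of_mem hc
    rw [Prod.ext_iff] at hteq
    simp only at hteq this
    omega

lemma card_filter_nearConcat_left (E : Diagram) (i l : ℕ) (hl : 0 < l)
    (P : ℕ × ℕ → Prop) [DecidablePred P] :
    ((nearConcat i (colD l) E).filter P).card
      = (E.filter (fun c => P (c.1, c.2 + 1))).card
        + ((Finset.range l).filter (fun t => P (t + (ht E - i), 0))).card := by
  classical
  have hcol : (colD l).image (fun c => (c.1 + (ht E - i), c.2))
      = (Finset.range l).image (fun t => (t + (ht E - i), 0)) := by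
    rw [colD, Finset.image_image]
    apply Finset.image_congr
    intro t _
    simp
  have h1 : (((Finset.range l).image (fun t => (t + (ht E - i), 0))).filter P).card
      = ((Finset.range l).filter (fun t => P (t + (ht E - i), 0))).card := by
    rw [Finset.filter_image, Finset.card_image_of_injective]
    intro t1 t2 hc
    have h := congrArg Prod.fst hc
    simp only at h
    omega
  have h2 : ((E.image (fun c => (c.1, c.2 + 1))).filter P).card
      = (E.filter (fun c => P (c.1, c.2 + 1))).card := by
    rw [Finset.filter_image, Finset.card_image_of_injective]
    intro c1 c2 hc
    rw [Prod.ext_iff] at hc ⊢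
    simp only at hc
    exact ⟨hc.1, by omega⟩
  unfold nearConcat
  rw [wd_colD hl, hcol, Finset.filter_union]
  rw [Finset.card_union_of_disjoint, h1, h2, Nat.add_comm]
  · apply Finset.disjoint_filter_filter
    rw [Finset.disjoint_left]
    rintro x hx1 hx2
    simp only [Finset.mem_image] at hx1 hx2
    obtain ⟨t, _, rfl⟩ := hx1
    obtain ⟨c, _, hteq⟩ := hx2
    rw [Prod.ext_iff] at hteq
    simp only at hteq
    omega

noncomputable def rightEntry (E : Diagram) (T : SSYT E) (i l : ℕ) : ℕ × ℕ → ℕ :=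
  fun c => if c.2 = wd E then (if c.1 < l then c.1 else 0)
    else if l - i ≤ c.1 then T.entry (c.1 - (l - i), c.2) else 0

noncomputable def leftEntry (E : Diagram) (T : SSYT E) (i l : ℕ) : ℕ × ℕ → ℕ :=
  fun c => if c.2 = 0 then (if ht E - i ≤ c.1 ∧ c.1 < (ht E - i) + l then c.1 - (ht E - i) else 0)
    else T.entry (c.1, c.2 - 1)

lemma rightEntry_shift {E : Diagram} (T : SSYT E) (i l : ℕ) {c : ℕ × ℕ} (hc : c ∈ E) :
    rightEntry E T i l (c.1 + (l - i), c.2) = T.entry c := by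
  have hcW : c.2 < wd E := lt_wd_of_mem hc
  simp only [rightEntry]
  rw [if_neg (by omega), if_pos (by omega)]
  congr 1
  rw [Prod.ext_iff]
  constructor <;> simp only <;> omega

lemma rightEntry_colcell (E : Diagram) (T : SSYT E) (i l t : ℕ) (htl : t < l) :
    rightEntry E T i l (t, wd E) = t := by
  have h : rightEntry E T i l (t, wd E)
      = if wd E = wd E then (if t < l then t else 0) else
        (if l - i ≤ t then T.entry (t - (l - i), wd E) else 0) := rfl
  rw [h, if_pos rfl, if_pos htl]

lemma leftEntry_shift {E : Diagram} (T : SSYT E) (i l : ℕ) (c : ℕ × ℕ) :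
    leftEntry E T i l (c.1, c.2 + 1) = T.entry c := by
  simp only [leftEntry]
  rw [if_neg (by omega)]
  congr 1

end AuxConcat


section AuxPkg
open Finset

/-- The invariant package carried through the induction. -/
def Pkg (E : Diagram) : Prop :=
  E.Nonempty ∧
  (∀ r, ((r, leftCol E) ∈ E ↔ r < ht E ∧ ht E ≤ r + colLenAt E (leftCol E))) ∧
  ∃ d : ℕ →₀ ℕ, ¬ IsFatStaircase d ∧ (∀ v, d (v + 1) ≤ d v) ∧
    ∃ T : SSYT E, IsLattice T ∧ content T = d ∧
      (∀ r, (r, wd E - 1) ∈ E → T.entry (r, wd E - 1) + topRow E ≤ r)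

lemma right_ssyt (E : Diagram) (T : SSYT E) (i l : ℕ) (hl : 0 < l)
    (hjun : ∀ s, (s, wd E - 1) ∈ E → T.entry (s, wd E - 1) ≤ s + (l - i)) :
    ∃ T' : SSYT (nearConcat i E (colD l)), T'.entry = rightEntry E T i l := by
  refine ⟨⟨rightEntry E T i l, ?_, ?_, ?_⟩, rfl⟩
  · -- rowWeak
    intro r j h1 h2
    rw [mem_nearConcat_right hl] at h1 h2
    simp only at h1 h2
    rcases h2 with ⟨h2a, h2b⟩ | ⟨h2a, h2b⟩
    · have hjW : j + 1 < wd E := lt_wd_of_mem h2b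
      rcases h1 with ⟨h1a, h1b⟩ | ⟨h1a, h1b⟩
      · have e1 : rightEntry E T i l (r, j) = T.entry (r - (l - i), j) := by
          simp only [rightEntry]
          rw [if_neg (by omega), if_pos (by omega)]
        have e2 : rightEntry E T i l (r, j + 1) = T.entry (r - (l - i), j + 1) := by
          simp only [rightEntry]
          rw [if_neg (by omega), if_pos (by omega)]
        rw [e1, e2]
        exact T.rowWeak (r - (l - i)) j h1b h2b
      · omega
    · -- (r, j+1) is a column cell
      have e2 : rightEntry E T i l (r, j + 1) = r := by
        simp only [rightEntry]
        rw [if_pos h2a, if_pos h2b]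
      rcases h1 with ⟨h1a, h1b⟩ | ⟨h1a, h1b⟩
      · have hjW : j < wd E := lt_wd_of_mem h1b
        have e1 : rightEntry E T i l (r, j) = T.entry (r - (l - i), j) := by
          simp only [rightEntry]
          rw [if_neg (by omega), if_pos (by omega)]
        have hj' : j = wd E - 1 := by omega
        have hju := hjun (r - (l - i)) (by rw [← hj']; exact h1b)
        rw [e1, e2, hj']
        omega
      · omega
  · -- colStrict
    intro r j h1 h2
    rw [mem_nearConcat_right hl] at h1 h2
    simp only at h1 h2
    rcases h2 with ⟨h2a, h2b⟩ | ⟨h2a, h2b⟩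
    · have hjW : j < wd E := lt_wd_of_mem h2b
      rcases h1 with ⟨h1a, h1b⟩ | ⟨h1a, h1b⟩
      · have e1 : rightEntry E T i l (r, j) = T.entry (r - (l - i), j) := by
          simp only [rightEntry]
          rw [if_neg (by omega), if_pos (by omega)]
        have e2 : rightEntry E T i l (r + 1, j) = T.entry (r + 1 - (l - i), j) := by
          simp only [rightEntry]
          rw [if_neg (by omega), if_pos (by omega)]
        rw [e1, e2]
        have hrw : r + 1 - (l - i) = (r - (l - i)) + 1 := by omega
        rw [hrw]
        apply T.colStrict _ j h1b
        rw [← hrw]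
        exact h2b
      · omega
    · rcases h1 with ⟨h1a, h1b⟩ | ⟨h1a, h1b⟩
      · have h3 : j < wd E := lt_wd_of_mem h1b
        omega
      · have e1 : rightEntry E T i l (r, j) = r := by
          simp only [rightEntry]
          rw [if_pos h1a, if_pos h1b]
        have e2 : rightEntry E T i l (r + 1, j) = r + 1 := by
          simp only [rightEntry]
          rw [if_pos h2a, if_pos h2b]
        rw [e1, e2]
        omega
  · -- zero_outside
    intro c hc
    rw [mem_nearConcat_right hl] at hc
    simp only [rightEntry]
    split_ifs with hA hB hC
    · exact absurd (Or.inr ⟨hA, hB⟩) hc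
    · rfl
    · apply T.zero_outside
      intro hmem
      exact hc (Or.inl ⟨hC, hmem⟩)
    · rfl

lemma pkg_right (E : Diagram) (i l : ℕ) (hl : 0 < l) (hil : i ≤ l)
    (hcol : i ≤ colLenAt E (wd E - 1)) (hp : Pkg E) :
    Pkg (nearConcat i E (colD l)) := by
  classical
  obtain ⟨hne, hI1, d, hdFS, hdanti, T, hTlat, hTcont, hTdrift⟩ := hp
  obtain ⟨r₀, hr₀⟩ := exists_leftCol hne
  have hleftlt : leftCol E < wd E := lt_wd_of_mem hr₀
  have hclle := colLen_le E hne (wd E - 1)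
  have hiht : i ≤ ht E := by omega
  have hjun : ∀ s, (s, wd E - 1) ∈ E → T.entry (s, wd E - 1) ≤ s + (l - i) := by
    intro s hs
    have := hTdrift s hs
    omega
  obtain ⟨T', hT'e⟩ := right_ssyt E T i l hl hjun
  have hmem : ∀ x : ℕ × ℕ, x ∈ nearConcat i E (colD l) ↔
      (l - i ≤ x.1 ∧ (x.1 - (l - i), x.2) ∈ E) ∨ (x.2 = wd E ∧ x.1 < l) :=
    mem_nearConcat_right hl
  have hcolmem : ((0 : ℕ), wd E) ∈ nearConcat i E (colD l) := (hmem _).mpr (Or.inr ⟨rfl, hl⟩)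
  have hne' : (nearConcat i E (colD l)).Nonempty := ⟨_, hcolmem⟩
  have hht' : ht (nearConcat i E (colD l)) = ht E + (l - i) := by
    obtain ⟨c, hc, hsup⟩ := Finset.exists_mem_eq_sup E hne (fun c => c.1 + 1)
    have hsup2 : ht E = c.1 + 1 := hsup
    apply ht_eq
    · intro x hx
      rcases (hmem x).mp hx with ⟨h1, h2⟩ | ⟨h1, h2⟩
      · have h3 : x.1 - (l - i) < ht E := lt_ht_of_mem h2
        omega
      · omega
    · refine ⟨(c.1 + (l - i), c.2), (hmem _).mpr (Or.inl ⟨by omega, ?_⟩),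
        by dsimp only; omega⟩
      have heq : (c.1 + (l - i) - (l - i), c.2) = c := by
        rw [Prod.ext_iff]; constructor <;> simp only <;> omega
      rwa [heq]
  have hwd' : wd (nearConcat i E (colD l)) = wd E + 1 := by
    apply wd_eq
    · intro x hx
      rcases (hmem x).mp hx with ⟨h1, h2⟩ | ⟨h1, h2⟩
      · have h3 : x.2 < wd E := lt_wd_of_mem (c := (x.1 - (l - i), x.2)) h2
        omega
      · omega
    · exact ⟨(0, wd E), hcolmem, rfl⟩
  have htop' : topRow (nearConcat i E (colD l)) = 0 :=
    topRow_eq ⟨wd E, hcolmem⟩ (fun c _ => Nat.zero_le _)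
  have hleft' : leftCol (nearConcat i E (colD l)) = leftCol E := by
    apply leftCol_eq
    · refine ⟨r₀ + (l - i), (hmem _).mpr (Or.inl ⟨by dsimp only; omega, ?_⟩)⟩
      have heq : ((r₀ + (l - i) - (l - i), leftCol E) : ℕ × ℕ) = (r₀, leftCol E) := by
        rw [Prod.ext_iff]; constructor <;> simp only <;> omega
      rwa [heq]
    · intro c hc
      rcases (hmem c).mp hc with ⟨h1, h2⟩ | ⟨h1, h2⟩
      · exact leftCol_le (c := (c.1 - (l - i), c.2)) h2
      · omega
  have hcl' : colLenAt (nearConcat i E (colD l)) (leftCol E) = colLenAt E (leftCol E) := by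
    unfold colLenAt
    rw [card_filter_nearConcat_right E i l hl (fun c => c.2 = leftCol E)]
    have he1 : E.filter (fun c => ((c.1 + (l - i), c.2) : ℕ × ℕ).2 = leftCol E)
        = E.filter (fun c => c.2 = leftCol E) := by
      apply Finset.filter_congr; intro c _; simp
    have he2 : ((Finset.range l).filter (fun t => ((t, wd E) : ℕ × ℕ).2 = leftCol E)).card = 0 := by
      rw [Finset.card_eq_zero, Finset.filter_eq_empty_iff]
      intro t _
      simp only
      omega
    rw [he1, he2]
    omega
  have hI1' : ∀ r, ((r, leftCol (nearConcat i E (colD l))) ∈ nearConcat i E (colD l) ↔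
      r < ht (nearConcat i E (colD l)) ∧
      ht (nearConcat i E (colD l)) ≤ r + colLenAt (nearConcat i E (colD l))
        (leftCol (nearConcat i E (colD l)))) := by
    intro r
    rw [hleft', hht', hcl']
    have hcLle : topRow E + colLenAt E (leftCol E) ≤ ht E := colLen_le E hne (leftCol E)
    constructor
    · intro hmem'
      rcases (hmem _).mp hmem' with ⟨h1, h2⟩ | ⟨h1, h2⟩
      · have h3 := (hI1 (r - (l - i))).mp h2
        have h4 : l - i ≤ r := h1
        omega
      · have h4 : leftCol E = wd E := h1
        omega
    · rintro ⟨h1, h2⟩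
      have hr : l - i ≤ r := by omega
      refine (hmem _).mpr (Or.inl ⟨hr, ?_⟩)
      apply (hI1 _).mpr
      omega
  -- lattice property
  have hTlat' : IsLattice T' := by
    intro x hx v
    have hcoleval : ∀ t, t < l → rightEntry E T i l (t, wd E) = t :=
      fun t htl => rightEntry_colcell E T i l t htl
    have hsplit : ∀ u, ((nearConcat i E (colD l)).filter
          (fun c' => ReadBefore c' x ∧ T'.entry c' = u)).card
        = (E.filter (fun c => ReadBefore (c.1 + (l - i), c.2) x ∧ T.entry c = u)).card
          + ((Finset.range l).filter (fun t => ReadBefore (t, wd E) x ∧ t = u)).card := by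
      intro u
      rw [card_filter_nearConcat_right E i l hl (fun c' => ReadBefore c' x ∧ T'.entry c' = u)]
      congr 1
      · apply congrArg
        apply Finset.filter_congr
        intro c hc
        rw [hT'e, rightEntry_shift T i l hc]
      · apply congrArg
        apply Finset.filter_congr
        intro t htr
        rw [Finset.mem_range] at htr
        rw [hT'e, hcoleval t htr]
    rw [hsplit (v + 1), hsplit v]
    have hC : ((Finset.range l).filter (fun t => ReadBefore (t, wd E) x ∧ t = v + 1)).card
        ≤ ((Finset.range l).filter (fun t => ReadBefore (t, wd E) x ∧ t = v)).card := by
      rw [filter_eq_single (v + 1), filter_eq_single v]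
      by_cases hcase : v + 1 ∈ Finset.range l ∧ ReadBefore (v + 1, wd E) x
      · rw [if_pos hcase, if_pos ⟨Finset.mem_range.mpr
          (by have := Finset.mem_range.mp hcase.1; omega),
          readBefore_up (Nat.le_succ v) hcase.2⟩]
      · rw [if_neg hcase]
        exact Nat.zero_le _
    have hEp : (E.filter (fun c => ReadBefore (c.1 + (l - i), c.2) x ∧ T.entry c = v + 1)).card
        ≤ (E.filter (fun c => ReadBefore (c.1 + (l - i), c.2) x ∧ T.entry c = v)).card := by
      rcases (hmem x).mp hx with ⟨h1, h2⟩ | ⟨h1, h2⟩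
      · have hkey : ∀ c ∈ E,
            (ReadBefore (c.1 + (l - i), c.2) x ↔ ReadBefore c (x.1 - (l - i), x.2)) := by
          intro c hc
          unfold ReadBefore
          dsimp only
          omega
        have he : ∀ u, E.filter (fun c => ReadBefore (c.1 + (l - i), c.2) x ∧ T.entry c = u)
            = E.filter (fun c => ReadBefore c (x.1 - (l - i), x.2) ∧ T.entry c = u) := by
          intro u; apply Finset.filter_congr; intro c hc; rw [hkey c hc]
        rw [he (v + 1), he v]
        exact hTlat _ h2 v
      · have hkey : ∀ c ∈ E,
            (ReadBefore (c.1 + (l - i), c.2) x ↔ c.1 < x.1 - (l - i)) := by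
          intro c hc
          have hcw := lt_wd_of_mem hc
          unfold ReadBefore
          dsimp only
          omega
        have he : ∀ u, E.filter (fun c => ReadBefore (c.1 + (l - i), c.2) x ∧ T.entry c = u)
            = E.filter (fun c => c.1 < x.1 - (l - i) ∧ T.entry c = u) := by
          intro u; apply Finset.filter_congr; intro c hc; rw [hkey c hc]
        rw [he (v + 1), he v]
        exact lattice_row_prefix hTlat _ v
    exact Nat.add_le_add hEp hC
  -- content
  have hcont' : content T' = d + ∑ t ∈ Finset.range l, Finsupp.single t 1 := by
    apply Finsupp.ext
    intro v
    rw [Finsupp.add_apply, colSum_apply, content_apply]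
    rw [card_filter_nearConcat_right E i l hl (fun c => T'.entry c = v)]
    have he1 : E.filter (fun c => T'.entry (c.1 + (l - i), c.2) = v)
        = E.filter (fun c => T.entry c = v) := by
      apply Finset.filter_congr; intro c hc; rw [hT'e, rightEntry_shift T i l hc]
    have he2 : (Finset.range l).filter (fun t => T'.entry (t, wd E) = v)
        = (Finset.range l).filter (fun t => t = v) := by
      apply Finset.filter_congr; intro t htr
      rw [Finset.mem_range] at htr
      rw [hT'e, rightEntry_colcell E T i l t htr]
    rw [he1, he2, ← content_apply T v, hTcont]
    by_cases h : v < l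
    · rw [Finset.filter_eq', if_pos (Finset.mem_range.mpr h), if_pos h, Finset.card_singleton]
    · rw [Finset.filter_eq', if_neg (by rw [Finset.mem_range]; omega), if_neg h,
        Finset.card_empty]
  -- drift for the new diagram
  have hdrift' : ∀ r, (r, wd (nearConcat i E (colD l)) - 1) ∈ nearConcat i E (colD l) →
      T'.entry (r, wd (nearConcat i E (colD l)) - 1) + topRow (nearConcat i E (colD l)) ≤ r := by
    intro r hr
    rw [hwd'] at hr ⊢
    simp only [Nat.add_sub_cancel] at hr ⊢
    rw [htop']
    rcases (hmem _).mp hr with ⟨h1, h2⟩ | ⟨h1, h2⟩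
    · have h3 : ((r, wd E) : ℕ × ℕ).2 < wd E :=
        lt_wd_of_mem (c := (((r, wd E) : ℕ × ℕ).1 - (l - i), ((r, wd E) : ℕ × ℕ).2)) h2
      simp only at h3
      omega
    · have h2' : r < l := h2
      rw [hT'e, rightEntry_colcell E T i l r h2']
      omega
  have hdanti' : ∀ v, (d + ∑ t ∈ Finset.range l, Finsupp.single t 1 : ℕ →₀ ℕ) (v + 1)
      ≤ (d + ∑ t ∈ Finset.range l, Finsupp.single t 1 : ℕ →₀ ℕ) v := by
    intro v
    rw [Finsupp.add_apply, Finsupp.add_apply, colSum_apply, colSum_apply]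
    have := hdanti v
    split_ifs <;> omega
  exact ⟨hne', hI1', d + ∑ t ∈ Finset.range l, Finsupp.single t 1,
    not_FS_add d l hdanti hdFS, hdanti', T', hTlat', hcont', hdrift'⟩

end AuxPkg


section AuxPkgLeft
open Finset

lemma leftEntry_colcell (E : Diagram) (T : SSYT E) (i l t : ℕ) (h1 : ht E - i ≤ t)
    (h2 : t < (ht E - i) + l) : leftEntry E T i l (t, 0) = t - (ht E - i) := by
  have h : leftEntry E T i l (t, 0)
      = if (0 : ℕ) = 0 then (if ht E - i ≤ t ∧ t < (ht E - i) + l then t - (ht E - i) else 0)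
        else T.entry (t, 0 - 1) := rfl
  rw [h, if_pos rfl, if_pos ⟨h1, h2⟩]

lemma left_ssyt (E : Diagram) (T : SSYT E) (i l : ℕ) (hl : 0 < l)
    (hjun : ∀ r, (r, 0) ∈ E → ht E - i ≤ r → r - (ht E - i) ≤ T.entry (r, 0)) :
    ∃ T' : SSYT (nearConcat i (colD l) E), T'.entry = leftEntry E T i l := by
  refine ⟨⟨leftEntry E T i l, ?_, ?_, ?_⟩, rfl⟩
  · -- rowWeak
    intro r j h1 h2
    rw [mem_nearConcat_left hl] at h1 h2
    simp only at h1 h2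
    rcases h2 with ⟨h2a, _, _⟩ | ⟨h2a, h2b⟩
    · omega
    · have h2b' : (r, j) ∈ E := by simpa using h2b
      have e2 : leftEntry E T i l (r, j + 1) = T.entry (r, j) := leftEntry_shift T i l (r, j)
      rcases h1 with ⟨h1a, h1b, h1c⟩ | ⟨h1a, h1b⟩
      · have hj0 : j = 0 := h1a
        subst hj0
        have e1 : leftEntry E T i l (r, 0) = r - (ht E - i) :=
          leftEntry_colcell E T i l r h1b h1c
        rw [e1, e2]
        exact hjun r h2b' h1b
      · have e1 : leftEntry E T i l (r, j) = T.entry (r, j - 1) := by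
          simp only [leftEntry]
          rw [if_neg (by omega)]
        rw [e1, e2]
        have hrw : j - 1 + 1 = j := by omega
        have hmono := T.rowWeak r (j - 1) h1b (by rw [hrw]; exact h2b')
        rw [hrw] at hmono
        exact hmono
  · -- colStrict
    intro r j h1 h2
    rw [mem_nearConcat_left hl] at h1 h2
    simp only at h1 h2
    rcases h2 with ⟨h2a, h2b, h2c⟩ | ⟨h2a, h2b⟩
    · subst h2a
      rcases h1 with ⟨_, h1b, h1c⟩ | ⟨h1a, h1b⟩
      · have e1 : leftEntry E T i l (r, 0) = r - (ht E - i) :=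
          leftEntry_colcell E T i l r h1b h1c
        have e2 : leftEntry E T i l (r + 1, 0) = r + 1 - (ht E - i) :=
          leftEntry_colcell E T i l (r + 1) h2b h2c
        rw [e1, e2]
        omega
      · omega
    · rcases h1 with ⟨h1a, _, _⟩ | ⟨h1a, h1b⟩
      · omega
      · have e1 : leftEntry E T i l (r, j) = T.entry (r, j - 1) := by
          simp only [leftEntry]
          rw [if_neg (by omega)]
        have e2 : leftEntry E T i l (r + 1, j) = T.entry (r + 1, j - 1) := by
          simp only [leftEntry]
          rw [if_neg (by omega)]
        rw [e1, e2]
        exact T.colStrict r (j - 1) h1b h2b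
  · -- zero_outside
    intro c hc
    rw [mem_nearConcat_left hl] at hc
    simp only [leftEntry]
    split_ifs with hA hB
    · exact absurd (Or.inl ⟨hA, hB.1, hB.2⟩) hc
    · rfl
    · apply T.zero_outside
      intro hmem
      exact hc (Or.inr ⟨by omega, hmem⟩)

lemma pkg_left (E : Diagram) (i l : ℕ) (hl : 0 < l) (hil : i ≤ l)
    (hcol : i ≤ colLenAt E (leftCol E)) (hp : Pkg E) :
    Pkg (nearConcat i (colD l) E) := by
  classical
  obtain ⟨hne, hI1, d, hdFS, hdanti, T, hTlat, hTcont, hTdrift⟩ := hp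
  obtain ⟨c₀, hc₀⟩ := id hne
  have hW1 : 1 ≤ wd E := by have := lt_wd_of_mem hc₀; omega
  have hclle := colLen_le E hne (leftCol E)
  have hiht : i ≤ ht E := by omega
  have hjun : ∀ r, (r, 0) ∈ E → ht E - i ≤ r → r - (ht E - i) ≤ T.entry (r, 0) := by
    intro r hr0 hrA
    have hlc0 : leftCol E = 0 := Nat.le_zero.mp (leftCol_le (c := (r, 0)) hr0)
    rw [hlc0] at hI1 hcol hclle
    have hIcol : ∀ s, ((s, 0) : ℕ × ℕ) ∈ E ↔ s < ht E ∧ ht E ≤ s + colLenAt E 0 := hI1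
    have hr' := (hIcol r).mp hr0
    have hchain : ∀ k, ht E - colLenAt E 0 + k < ht E →
        k ≤ T.entry (ht E - colLenAt E 0 + k, 0) := by
      intro k
      induction k with
      | zero => intro _; exact Nat.zero_le _
      | succ k ihk =>
        intro hk
        have hmem1 : ((ht E - colLenAt E 0 + k, 0) : ℕ × ℕ) ∈ E := by
          apply (hIcol _).mpr
          omega
        have hmem2 : ((ht E - colLenAt E 0 + k + 1, 0) : ℕ × ℕ) ∈ E := by
          apply (hIcol _).mpr
          omega
        have hcs := T.colStrict _ 0 hmem1 hmem2
        have hih := ihk (by omega)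
        show k + 1 ≤ T.entry (ht E - colLenAt E 0 + k + 1, 0)
        omega
    have hkey := hchain (r - (ht E - colLenAt E 0)) (by omega)
    have hre : ht E - colLenAt E 0 + (r - (ht E - colLenAt E 0)) = r := by
      omega
    rw [hre] at hkey
    omega
  obtain ⟨T', hT'e⟩ := left_ssyt E T i l hl hjun
  have hmem : ∀ x : ℕ × ℕ, x ∈ nearConcat i (colD l) E ↔
      (x.2 = 0 ∧ ht E - i ≤ x.1 ∧ x.1 < (ht E - i) + l) ∨ (1 ≤ x.2 ∧ (x.1, x.2 - 1) ∈ E) :=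
    mem_nearConcat_left hl
  have hcolmem : ((ht E - i, 0) : ℕ × ℕ) ∈ nearConcat i (colD l) E :=
    (hmem _).mpr (Or.inl ⟨rfl, le_refl _, by dsimp only; omega⟩)
  have hne' : (nearConcat i (colD l) E).Nonempty := ⟨_, hcolmem⟩
  have hht' : ht (nearConcat i (colD l) E) = (ht E - i) + l := by
    apply ht_eq
    · intro x hx
      rcases (hmem x).mp hx with ⟨h1, h2, h3⟩ | ⟨h1, h2⟩
      · omega
      · have h3 : x.1 < ht E := lt_ht_of_mem (c := (x.1, x.2 - 1)) h2
        omega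
    · exact ⟨(ht E - i + l - 1, 0), (hmem _).mpr (Or.inl ⟨rfl, by dsimp only; omega,
        by dsimp only; omega⟩), by dsimp only; omega⟩
  have hwd' : wd (nearConcat i (colD l) E) = wd E + 1 := by
    apply wd_eq
    · intro x hx
      rcases (hmem x).mp hx with ⟨h1, h2, h3⟩ | ⟨h1, h2⟩
      · omega
      · have h3 : x.2 - 1 < wd E := lt_wd_of_mem (c := (x.1, x.2 - 1)) h2
        omega
    · obtain ⟨c, hc, hsup⟩ := Finset.exists_mem_eq_sup E hne (fun c => c.2 + 1)
      have hsup2 : wd E = c.2 + 1 := hsup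
      refine ⟨(c.1, c.2 + 1), (hmem _).mpr (Or.inr ⟨by dsimp only; omega, ?_⟩),
        by dsimp only; omega⟩
      have heq : ((c.1, c.2 + 1 - 1) : ℕ × ℕ) = c := by
        rw [Prod.ext_iff]
        constructor <;> dsimp only <;> omega
      rwa [heq]
  have htop' : topRow (nearConcat i (colD l) E) = topRow E := by
    obtain ⟨j₀, hj₀⟩ := exists_topRow hne
    apply topRow_eq
    · exact ⟨j₀ + 1, (hmem _).mpr (Or.inr ⟨by dsimp only; omega, by simpa using hj₀⟩)⟩
    · intro c hc
      rcases (hmem c).mp hc with ⟨h1, h2, h3⟩ | ⟨h1, h2⟩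
      · have h4 : topRow E + colLenAt E (leftCol E) ≤ ht E := hclle
        omega
      · exact topRow_le (c := (c.1, c.2 - 1)) h2
  have hleft' : leftCol (nearConcat i (colD l) E) = 0 :=
    leftCol_eq ⟨ht E - i, hcolmem⟩ (fun c _ => Nat.zero_le _)
  have hcl' : colLenAt (nearConcat i (colD l) E) 0 = l := by
    unfold colLenAt
    rw [card_filter_nearConcat_left E i l hl (fun c => c.2 = 0)]
    have he1 : E.filter (fun c => ((c.1, c.2 + 1) : ℕ × ℕ).2 = 0) = ∅ := by
      rw [Finset.filter_eq_empty_iff]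
      intro c hc
      dsimp only
      omega
    have he2 : (Finset.range l).filter (fun t => ((t + (ht E - i), 0) : ℕ × ℕ).2 = 0)
        = Finset.range l := by
      rw [Finset.filter_eq_self]
      intro t _
      rfl
    rw [he1, he2]
    simp
  have hI1' : ∀ r, ((r, leftCol (nearConcat i (colD l) E)) ∈ nearConcat i (colD l) E ↔
      r < ht (nearConcat i (colD l) E) ∧ ht (nearConcat i (colD l) E)
        ≤ r + colLenAt (nearConcat i (colD l) E) (leftCol (nearConcat i (colD l) E))) := by
    intro r
    rw [hleft', hht', hcl']
    constructor
    · intro hm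
      rcases (hmem _).mp hm with ⟨h1, h2, h3⟩ | ⟨h1, h2⟩
      · have h2' : ht E - i ≤ r := h2
        have h3' : r < (ht E - i) + l := h3
        omega
      · have h1' : 1 ≤ (0 : ℕ) := h1
        omega
    · rintro ⟨ha, hb⟩
      exact (hmem _).mpr (Or.inl ⟨rfl, by dsimp only; omega, by dsimp only; omega⟩)
  have hTlat' : IsLattice T' := by
    intro x hx v
    have hsplit : ∀ u, ((nearConcat i (colD l) E).filter
          (fun c' => ReadBefore c' x ∧ T'.entry c' = u)).card
        = (E.filter (fun c => ReadBefore (c.1, c.2 + 1) x ∧ T.entry c = u)).card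
          + ((Finset.range l).filter (fun t => ReadBefore (t + (ht E - i), 0) x ∧ t = u)).card := by
      intro u
      rw [card_filter_nearConcat_left E i l hl (fun c' => ReadBefore c' x ∧ T'.entry c' = u)]
      congr 1
      · apply congrArg
        apply Finset.filter_congr
        intro c hc
        rw [hT'e, leftEntry_shift T i l c]
      · apply congrArg
        apply Finset.filter_congr
        intro t htr
        rw [Finset.mem_range] at htr
        rw [hT'e, leftEntry_colcell E T i l (t + (ht E - i)) (by omega) (by omega),
          Nat.add_sub_cancel]
    rw [hsplit (v + 1), hsplit v]
    have hC : ((Finset.range l).filter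
          (fun t => ReadBefore (t + (ht E - i), 0) x ∧ t = v + 1)).card
        ≤ ((Finset.range l).filter (fun t => ReadBefore (t + (ht E - i), 0) x ∧ t = v)).card := by
      rw [filter_eq_single (v + 1), filter_eq_single v]
      by_cases hcase : v + 1 ∈ Finset.range l ∧ ReadBefore (v + 1 + (ht E - i), 0) x
      · rw [if_pos hcase, if_pos ⟨Finset.mem_range.mpr
          (by have := Finset.mem_range.mp hcase.1; omega),
          readBefore_up (by omega) hcase.2⟩]
      · rw [if_neg hcase]
        exact Nat.zero_le _
    have hEp : (E.filter (fun c => ReadBefore (c.1, c.2 + 1) x ∧ T.entry c = v + 1)).card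
        ≤ (E.filter (fun c => ReadBefore (c.1, c.2 + 1) x ∧ T.entry c = v)).card := by
      rcases (hmem x).mp hx with ⟨h1, h2, h3⟩ | ⟨h1, h2⟩
      · have hkey : ∀ c ∈ E, (ReadBefore (c.1, c.2 + 1) x ↔ c.1 < x.1 + 1) := by
          intro c hc
          unfold ReadBefore
          dsimp only
          omega
        have he : ∀ u, E.filter (fun c => ReadBefore (c.1, c.2 + 1) x ∧ T.entry c = u)
            = E.filter (fun c => c.1 < x.1 + 1 ∧ T.entry c = u) := by
          intro u
          apply Finset.filter_congr
          intro c hc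
          rw [hkey c hc]
        rw [he (v + 1), he v]
        exact lattice_row_prefix hTlat _ v
      · have hkey : ∀ c ∈ E, (ReadBefore (c.1, c.2 + 1) x ↔ ReadBefore c (x.1, x.2 - 1)) := by
          intro c hc
          unfold ReadBefore
          dsimp only
          omega
        have he : ∀ u, E.filter (fun c => ReadBefore (c.1, c.2 + 1) x ∧ T.entry c = u)
            = E.filter (fun c => ReadBefore c (x.1, x.2 - 1) ∧ T.entry c = u) := by
          intro u
          apply Finset.filter_congr
          intro c hc
          rw [hkey c hc]
        rw [he (v + 1), he v]
        exact hTlat _ h2 v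
    exact Nat.add_le_add hEp hC
  have hcont' : content T' = d + ∑ t ∈ Finset.range l, Finsupp.single t 1 := by
    apply Finsupp.ext
    intro v
    rw [Finsupp.add_apply, colSum_apply, content_apply]
    rw [card_filter_nearConcat_left E i l hl (fun c => T'.entry c = v)]
    have he1 : E.filter (fun c => T'.entry (c.1, c.2 + 1) = v)
        = E.filter (fun c => T.entry c = v) := by
      apply Finset.filter_congr
      intro c hc
      rw [hT'e, leftEntry_shift T i l c]
    have he2 : (Finset.range l).filter (fun t => T'.entry (t + (ht E - i), 0) = v)
        = (Finset.range l).filter (fun t => t = v) := by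
      apply Finset.filter_congr
      intro t htr
      rw [Finset.mem_range] at htr
      rw [hT'e, leftEntry_colcell E T i l (t + (ht E - i)) (by omega) (by omega),
        Nat.add_sub_cancel]
    rw [he1, he2, ← content_apply T v, hTcont]
    by_cases h : v < l
    · rw [Finset.filter_eq', if_pos (Finset.mem_range.mpr h), if_pos h, Finset.card_singleton]
    · rw [Finset.filter_eq', if_neg (by rw [Finset.mem_range]; omega), if_neg h,
        Finset.card_empty]
  have hdrift' : ∀ r, (r, wd (nearConcat i (colD l) E) - 1) ∈ nearConcat i (colD l) E →
      T'.entry (r, wd (nearConcat i (colD l) E) - 1) + topRow (nearConcat i (colD l) E) ≤ r := by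
    intro r hr
    rw [hwd'] at hr ⊢
    simp only [Nat.add_sub_cancel] at hr ⊢
    rw [htop']
    rcases (hmem _).mp hr with ⟨h1, h2, h3⟩ | ⟨h1, h2⟩
    · have h1' : wd E = 0 := h1
      omega
    · have h2' : (r, wd E - 1) ∈ E := h2
      have he : T'.entry (r, wd E) = T.entry (r, wd E - 1) := by
        have hs := leftEntry_shift T i l (r, wd E - 1)
        have hrw : (wd E - 1) + 1 = wd E := by omega
        rw [hrw] at hs
        rw [hT'e]
        exact hs
      rw [he]
      exact hTdrift r h2'
  have hdanti' : ∀ v, (d + ∑ t ∈ Finset.range l, Finsupp.single t 1 : ℕ →₀ ℕ) (v + 1)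
      ≤ (d + ∑ t ∈ Finset.range l, Finsupp.single t 1 : ℕ →₀ ℕ) v := by
    intro v
    rw [Finsupp.add_apply, Finsupp.add_apply, colSum_apply, colSum_apply]
    have := hdanti v
    split_ifs <;> omega
  exact ⟨hne', hI1', d + ∑ t ∈ Finset.range l, Finsupp.single t 1,
    not_FS_add d l hdanti hdFS, hdanti', T', hTlat', hcont', hdrift'⟩

end AuxPkgLeft


section AuxBase
open Finset

lemma mem_skew_iff {lam mu : YoungDiagram} {r j : ℕ} :
    (r, j) ∈ lam.cells \ mu.cells ↔ mu.rowLen r ≤ j ∧ j < lam.rowLen r := by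
  rw [Finset.mem_sdiff, YoungDiagram.mem_cells, YoungDiagram.mem_cells,
    YoungDiagram.mem_iff_lt_rowLen, YoungDiagram.mem_iff_lt_rowLen]
  omega

lemma mem_skew_col {lam mu : YoungDiagram} {r j : ℕ} :
    (r, j) ∈ lam.cells \ mu.cells ↔ mu.colLen j ≤ r ∧ r < lam.colLen j := by
  rw [Finset.mem_sdiff, YoungDiagram.mem_cells, YoungDiagram.mem_cells,
    YoungDiagram.mem_iff_lt_colLen, YoungDiagram.mem_iff_lt_colLen]
  omega

lemma skew_row_mono {lam mu : YoungDiagram} (T : SSYT (lam.cells \ mu.cells)) :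
    ∀ (k r j : ℕ), (r, j) ∈ lam.cells \ mu.cells → (r, j + k) ∈ lam.cells \ mu.cells →
      T.entry (r, j) ≤ T.entry (r, j + k) := by
  intro k
  induction k with
  | zero => intro r j _ _; exact le_refl _
  | succ k ih =>
    intro r j h1 h2
    have hmid : (r, j + k) ∈ lam.cells \ mu.cells := by
      rw [mem_skew_iff] at h1 h2 ⊢
      omega
    have hstep := T.rowWeak r (j + k) hmid (by
      have : j + k + 1 = j + (k + 1) := by omega
      rw [this]
      exact h2)
    have hih := ih r j h1 hmid
    have : j + k + 1 = j + (k + 1) := by omega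
    rw [this] at hstep
    omega

lemma skew_entry_bound {lam mu : YoungDiagram} {T : SSYT (lam.cells \ mu.cells)}
    (hT : IsLattice T) :
    ∀ v r j, (r, j) ∈ lam.cells \ mu.cells → T.entry (r, j) = v →
      topRow (lam.cells \ mu.cells) + v ≤ r := by
  intro v
  induction v with
  | zero =>
    intro r j hm _
    have := topRow_le (c := (r, j)) hm
    omega
  | succ v ih =>
    intro r j hm hv
    have h1 := hT (r, j) hm v
    have hmem : (r, j) ∈ (lam.cells \ mu.cells).filter
        (fun c' => ReadBefore c' (r, j) ∧ T.entry c' = v + 1) :=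
      Finset.mem_filter.mpr ⟨hm, Or.inr ⟨rfl, le_refl _⟩, hv⟩
    have h2 : 0 < ((lam.cells \ mu.cells).filter
        (fun c' => ReadBefore c' (r, j) ∧ T.entry c' = v)).card :=
      lt_of_lt_of_le (Finset.card_pos.mpr ⟨_, hmem⟩) h1
    obtain ⟨⟨c1, c2⟩, hc'⟩ := Finset.card_pos.mp h2
    rw [Finset.mem_filter] at hc'
    obtain ⟨hc'D, hrb, hent⟩ := hc'
    rcases hrb with hlt | ⟨heq, hle⟩
    · have := ih c1 c2 hc'D hent
      simp only at hlt
      omega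
    · exfalso
      simp only at heq hle
      subst heq
      have hch := skew_row_mono T (c2 - j) c1 j hm (by
        have : j + (c2 - j) = c2 := by omega
        rw [this]
        exact hc'D)
      have : j + (c2 - j) = c2 := by omega
      rw [this] at hch
      omega

lemma nearConcat_colD_zero_right (i : ℕ) (E : Diagram) : nearConcat i E (colD 0) = E := by
  have h1 : colD 0 = (∅ : Diagram) := by simp [colD]
  have h2 : (fun c : ℕ × ℕ => (c.1 + (ht (∅ : Diagram) - i), c.2)) = id := by
    funext c
    simp [ht]
  rw [nearConcat, h1, h2, Finset.image_id, Finset.image_empty, Finset.union_empty]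

lemma nearConcat_colD_zero_left (i : ℕ) (E : Diagram) : nearConcat i (colD 0) E = E := by
  have h1 : colD 0 = (∅ : Diagram) := by simp [colD]
  have h2 : (fun c : ℕ × ℕ => (c.1, c.2 + wd (colD 0))) = id := by
    funext c
    rw [h1]
    simp [wd]
  rw [nearConcat, h2, Finset.image_id, h1, Finset.image_empty, Finset.empty_union]

lemma pkg_base (D : Diagram) (hD : IsSkewDiagram D) (hnot : ¬ IsSumOfFatStaircases D) :
    Pkg D := by
  classical
  obtain ⟨lam, mu, hle, rfl⟩ := hD
  unfold IsSumOfFatStaircases at hnot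
  push_neg at hnot
  obtain ⟨d, hdne, hdFS⟩ := hnot
  obtain ⟨T, hTlat, hTcont⟩ := exists_of_lrCount hdne
  have hdne0 : d ≠ 0 := by
    rintro rfl
    exact hdFS isFatStaircase_zero
  have hne : (lam.cells \ mu.cells).Nonempty := by
    rcases Finset.eq_empty_or_nonempty (lam.cells \ mu.cells) with hemp | h
    · exfalso
      apply hdne0
      rw [← hTcont]
      unfold content
      simp only [hemp, Finset.sum_empty]
    · exact h
  have hdanti : ∀ v, d (v + 1) ≤ d v := by
    intro v
    rw [← hTcont]
    exact content_antitone hTlat v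
  have hdrift : ∀ r, (r, wd (lam.cells \ mu.cells) - 1) ∈ lam.cells \ mu.cells →
      T.entry (r, wd (lam.cells \ mu.cells) - 1) + topRow (lam.cells \ mu.cells) ≤ r := by
    intro r hr
    have := skew_entry_bound hTlat (T.entry (r, wd (lam.cells \ mu.cells) - 1)) r _ hr rfl
    omega
  -- I1
  obtain ⟨rL, hrL⟩ := exists_leftCol hne
  have hrL' := mem_skew_col.mp hrL
  have hI1 : ∀ r, ((r, leftCol (lam.cells \ mu.cells)) ∈ lam.cells \ mu.cells ↔
      r < ht (lam.cells \ mu.cells) ∧ ht (lam.cells \ mu.cells)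
        ≤ r + colLenAt (lam.cells \ mu.cells) (leftCol (lam.cells \ mu.cells))) := by
    have hht : ht (lam.cells \ mu.cells) = lam.colLen (leftCol (lam.cells \ mu.cells)) := by
      apply ht_eq
      · intro c hc
        have hc2 : (c.1, c.2) ∈ lam.cells \ mu.cells := by rwa [Prod.mk.eta]
        have hc' := mem_skew_col.mp hc2
        have hmono := lam.colLen_anti (leftCol (lam.cells \ mu.cells)) c.2 (leftCol_le hc)
        omega
      · refine ⟨(lam.colLen (leftCol (lam.cells \ mu.cells)) - 1,
          leftCol (lam.cells \ mu.cells)), mem_skew_col.mpr ⟨by omega, by omega⟩,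
          by dsimp only; omega⟩
    have hcolLen : colLenAt (lam.cells \ mu.cells) (leftCol (lam.cells \ mu.cells))
        = lam.colLen (leftCol (lam.cells \ mu.cells))
          - mu.colLen (leftCol (lam.cells \ mu.cells)) := by
      unfold colLenAt
      have heq : (lam.cells \ mu.cells).filter (fun c => c.2 = leftCol (lam.cells \ mu.cells))
          = (Finset.Ico (mu.colLen (leftCol (lam.cells \ mu.cells)))
              (lam.colLen (leftCol (lam.cells \ mu.cells)))).image
            (fun r => (r, leftCol (lam.cells \ mu.cells))) := by
        ext ⟨a, b⟩
        simp only [Finset.mem_filter, Finset.mem_image, Finset.mem_Ico, Prod.mk.injEq]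
        constructor
        · rintro ⟨hm, rfl⟩
          exact ⟨a, mem_skew_col.mp hm, rfl, rfl⟩
        · rintro ⟨x, hx, rfl, rfl⟩
          exact ⟨mem_skew_col.mpr hx, rfl⟩
      rw [heq, Finset.card_image_of_injective, Nat.card_Ico]
      intro a b hab
      exact (Prod.ext_iff.mp hab).1
    intro r
    rw [hht, hcolLen, mem_skew_col]
    have hmu := mu.colLen_anti 0 (leftCol (lam.cells \ mu.cells)) (Nat.zero_le _)
    omega
  exact ⟨hne, hI1, d, hdFS, hdanti, T, hTlat, hTcont, hdrift⟩

end AuxBase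

/-- adding any finite number of columns to a skew diagram that is
not a sum of fat staircases never produces a sum of fat staircases. -/
theorem colExt_not_sumOfFatStaircases (D D' : Diagram) (hD : IsSkewDiagram D)
    (hnot : ¬ IsSumOfFatStaircases D) (hext : ColExt D D') :
    ¬ IsSumOfFatStaircases D' := by
  have hpkg : Pkg D' := by
    have base := pkg_base D hD hnot
    induction hext with
    | refl => exact base
    | left E i l h hil hE ih =>
      rcases Nat.eq_zero_or_pos l with rfl | hl
      · rw [nearConcat_colD_zero_left]
        exact ih
      · exact pkg_left E i l hl hil hE (ih)
    | right E i l h hil hE ih =>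
      rcases Nat.eq_zero_or_pos l with rfl | hl
      · rw [nearConcat_colD_zero_right]
        exact ih
      · exact pkg_right E i l hl hil hE (ih)
  obtain ⟨hne', hI1', d, hdFS, hdanti, T, hTlat, hTcont, hdrift⟩ := hpkg
  intro hsum
  exact hdFS (hsum d (lrCount_ne_zero T hTlat hTcont))
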